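/- For every real η > 0, every integer n ≥ 2, every initial configuration C_0 ⊆ {0,...,n-1} with k = |C_0|, and every natural number t with t ≥ 4(n-1)(n·ln 2 + η·ln n), the probability that the configuration C_t after t steps of probabilistic bubble-sort is not sorted (i.e., C_t ≠ {n-k,...,n-1}) is at most n^{-η}. -/

import Mathlib

open scoped ENNReal

/-- `lcount C i` is the number of ones strictly before position `i`,
i.e. `|C ∩ {0,…,i-1}|`. -/
def lcount (C : Finset ℕ) (i : ℕ) : ℕ := (C ∩ Finset.range i).card

/-- Potential of a configuration `C ⊆ {0,…,n-1}`:
`P(C) = Σ_{i∈C} (2^(n-k+2l_i-i) - 2^(l_i))` where `k = |C|`, `l_i = |C ∩ {0,…,i-1}|`. -/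
def potential (n : ℕ) (C : Finset ℕ) : ℕ :=
  ∑ i ∈ C, (2 ^ (n - C.card + 2 * lcount C i - i) - 2 ^ lcount C i)

/-- One step of probabilistic bubble-sort at position `j`: if `j ∈ C` and `j+1 ∉ C`,
swap, i.e. `(C \ {j}) ∪ {j+1}`; otherwise unchanged. -/
def bstep (C : Finset ℕ) (j : ℕ) : Finset ℕ :=
  if j ∈ C ∧ j + 1 ∉ C then insert (j + 1) (C.erase j) else C

/-- The distribution of one step of probabilistic bubble-sort: the position `j` is chosen
uniformly at random from `{0,…,n-2}` and `bstep C j` is returned. -/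
noncomputable def stepPMF (n : ℕ) (C : Finset ℕ) : PMF (Finset ℕ) :=
  if h : (Finset.range (n - 1)).Nonempty then
    (PMF.uniformOfFinset (Finset.range (n - 1)) h).map (bstep C)
  else PMF.pure C

/-- The distribution of the configuration after `t` steps of probabilistic bubble-sort,
started from `C`. -/
noncomputable def iterPMF (n : ℕ) (C : Finset ℕ) : ℕ → PMF (Finset ℕ)
  | 0 => PMF.pure C
  | t + 1 => (iterPMF n C t).bind (stepPMF n)

lemma lcount_le_card (C : Finset ℕ) (i : ℕ) : lcount C i ≤ C.card :=
  Finset.card_le_card Finset.inter_subset_left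

lemma lcount_le_self (C : Finset ℕ) (i : ℕ) : lcount C i ≤ i := by
  have : C ∩ Finset.range i ⊆ Finset.range i := Finset.inter_subset_right
  have := Finset.card_le_card this
  simpa [lcount] using this

lemma lcount_lt_card {C : Finset ℕ} {i : ℕ} (hi : i ∈ C) : lcount C i < C.card := by
  have h : insert i (C ∩ Finset.range i) ⊆ C := by
    intro x hx
    rcases Finset.mem_insert.1 hx with rfl | hx
    · exact hi
    · exact (Finset.mem_inter.1 hx).1
  have := Finset.card_le_card h
  rwa [Finset.card_insert_of_notMem (by simp)] at this

lemma card_sdiff_range (C : Finset ℕ) (i : ℕ) :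
    (C \ Finset.range i).card = C.card - lcount C i := by
  have : C ∩ Finset.range i ⊆ C := Finset.inter_subset_left
  rw [lcount, ← Finset.card_sdiff_of_subset this]
  congr 1
  ext x; simp [and_comm]

lemma key_ineq {n : ℕ} {C : Finset ℕ} (hC : C ⊆ Finset.range n) {i : ℕ} (hi : i ∈ C) :
    i + C.card ≤ n + lcount C i := by
  have h1 : C \ Finset.range i ⊆ Finset.Ico i n := by
    intro x hx
    rcases Finset.mem_sdiff.1 hx with ⟨hxC, hxr⟩
    exact Finset.mem_Ico.2 ⟨by simpa using hxr, by simpa using hC hxC⟩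
  have h2 := Finset.card_le_card h1
  rw [card_sdiff_range, Nat.card_Ico] at h2
  have h3 := lcount_le_card C i
  have h4 : i < n := by simpa using hC hi
  omega





lemma key_ineq_strict {n : ℕ} {C : Finset ℕ} (hC : C ⊆ Finset.range n) {j : ℕ}
    (hj : j ∈ C) (hj1 : j + 1 ∉ C) (hjn : j + 1 < n) :
    j + 1 + C.card ≤ n + lcount C j := by
  have h1 : C \ Finset.range j ⊆ (Finset.Ico j n).erase (j+1) := by
    intro x hx
    rcases Finset.mem_sdiff.1 hx with ⟨hxC, hxr⟩
    refine Finset.mem_erase.2 ⟨?_, Finset.mem_Ico.2 ⟨by simpa using hxr, by simpa using hC hxC⟩⟩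
    rintro rfl; exact hj1 hxC
  have h2 := Finset.card_le_card h1
  rw [card_sdiff_range, Finset.card_erase_of_mem (by simp; omega), Nat.card_Ico] at h2
  have h3 := lcount_le_card C j
  have h4 : j < n := by simpa using hC hj
  omega

lemma bstep_card {C : Finset ℕ} (j : ℕ) : (bstep C j).card = C.card := by
  unfold bstep
  split
  · next h =>
    rw [Finset.card_insert_of_notMem (by simp [Finset.mem_erase, h.2]),
      Finset.card_erase_of_mem h.1]
    have : 1 ≤ C.card := Finset.card_pos.2 ⟨j, h.1⟩
    omega
  · rfl

lemma bstep_subset {n : ℕ} {C : Finset ℕ} (hC : C ⊆ Finset.range n) {j : ℕ}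
    (hjn : j + 1 < n) : bstep C j ⊆ Finset.range n := by
  unfold bstep
  split
  · exact Finset.insert_subset (by simpa using hjn) ((Finset.erase_subset _ _).trans hC)
  · exact hC

lemma lcount_bstep {C : Finset ℕ} {j : ℕ} (hj : j ∈ C) (hj1 : j + 1 ∉ C)
    {i : ℕ} (hi : i ∈ C) (hij : i ≠ j) :
    lcount (insert (j + 1) (C.erase j)) i = lcount C i := by
  unfold lcount
  rcases lt_or_ge j i with h | h
  · -- i > j, and i ≠ j+1 since j+1 ∉ C; so i > j+1
    have hij1 : i ≠ j + 1 := by rintro rfl; exact hj1 hi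
    have hii : j + 1 < i := by omega
    have : insert (j+1) (C.erase j) ∩ Finset.range i
        = insert (j+1) ((C ∩ Finset.range i).erase j) := by
      ext x
      simp only [Finset.mem_inter, Finset.mem_insert, Finset.mem_erase, Finset.mem_range]
      constructor
      · rintro ⟨rfl | ⟨hxj, hxC⟩, hxr⟩
        · exact Or.inl rfl
        · exact Or.inr ⟨hxj, hxC, hxr⟩
      · rintro (rfl | ⟨hxj, hxC, hxr⟩)
        · exact ⟨Or.inl rfl, hii⟩
        · exact ⟨Or.inr ⟨hxj, hxC⟩, hxr⟩
    rw [this, Finset.card_insert_of_notMem (by simp [Finset.mem_erase, hj1]),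
      Finset.card_erase_of_mem (by simp [hj]; omega)]
    have : 1 ≤ (C ∩ Finset.range i).card := Finset.card_pos.2 ⟨j, by simp [hj]; omega⟩
    omega
  · -- i ≤ j : neither j nor j+1 is < i
    congr 1
    ext x
    simp only [Finset.mem_inter, Finset.mem_insert, Finset.mem_erase, Finset.mem_range]
    constructor
    · rintro ⟨rfl | ⟨hxj, hxC⟩, hxr⟩
      · exact absurd hxr (by omega)
      · exact ⟨hxC, hxr⟩
    · rintro ⟨hxC, hxr⟩
      exact ⟨Or.inr ⟨by omega, hxC⟩, hxr⟩

lemma lcount_bstep_new {C : Finset ℕ} {j : ℕ} (hj : j ∈ C) :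
    lcount (insert (j + 1) (C.erase j)) (j + 1) = lcount C j := by
  unfold lcount
  congr 1
  ext x
  simp only [Finset.mem_inter, Finset.mem_insert, Finset.mem_erase, Finset.mem_range]
  constructor
  · rintro ⟨rfl | ⟨hxj, hxC⟩, hxr⟩
    · exact absurd hxr (by omega)
    · exact ⟨hxC, by omega⟩
  · rintro ⟨hxC, hxr⟩
    exact ⟨Or.inr ⟨by omega, hxC⟩, by omega⟩

lemma potential_bstep_swap {n : ℕ} {C : Finset ℕ} (hC : C ⊆ Finset.range n) {j : ℕ}
    (hj : j ∈ C) (hj1 : j + 1 ∉ C) (hjn : j + 1 < n) :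
    potential n (bstep C j) + 2 ^ (n - C.card + 2 * lcount C j - j - 1) = potential n C := by
  have hb : bstep C j = insert (j + 1) (C.erase j) := if_pos ⟨hj, hj1⟩
  have hcard : (bstep C j).card = C.card := bstep_card j
  rw [hb] at hcard
  have hkey := key_ineq hC hj
  have hkeys := key_ineq_strict hC hj hj1 hjn
  have hjC1 : j + 1 ∉ C.erase j := by simp [Finset.mem_erase, hj1]
  rw [hb, potential, Finset.sum_insert hjC1, hcard]
  have hsum : ∀ i ∈ C.erase j,
      2 ^ (n - C.card + 2 * lcount (insert (j+1) (C.erase j)) i - i)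
        - 2 ^ lcount (insert (j+1) (C.erase j)) i
      = 2 ^ (n - C.card + 2 * lcount C i - i) - 2 ^ lcount C i := by
    intro i hi
    rcases Finset.mem_erase.1 hi with ⟨hij, hiC⟩
    rw [lcount_bstep hj hj1 hiC hij]
  rw [Finset.sum_congr rfl hsum, lcount_bstep_new hj]
  have hpot : potential n C
      = (2 ^ (n - C.card + 2 * lcount C j - j) - 2 ^ lcount C j)
        + ∑ i ∈ C.erase j, (2 ^ (n - C.card + 2 * lcount C i - i) - 2 ^ lcount C i) := by
    rw [potential, ← Finset.add_sum_erase _ _ hj]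
  rw [hpot]
  -- arithmetic: exponents
  have hl := lcount_le_card C j
  have hlj := lcount_le_self C j
  have hkn : C.card ≤ n := by simpa using Finset.card_le_card hC
  set l := lcount C j with hldef
  set k := C.card with hkdef
  have he2 : l + 1 ≤ n - k + 2*l - j := by omega
  obtain ⟨m, hm⟩ : ∃ m, n - k + 2 * l - j = m + 1 := ⟨n - k + 2*l - j - 1, by omega⟩
  have he1 : n - k + 2 * l - (j + 1) = m := by omega
  have he1' : n - k + 2 * l - j - 1 = m := by omega
  rw [he1, he1', hm, pow_succ]
  have h2l : 2 ^ l ≤ 2 ^ m := Nat.pow_le_pow_right (by norm_num) (by omega)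
  omega

lemma bstep_eq_of_not {C : Finset ℕ} {j : ℕ} (h : ¬(j ∈ C ∧ j + 1 ∉ C)) : bstep C j = C :=
  if_neg h

lemma lcount_succ_of_mem {C : Finset ℕ} {i : ℕ} (hi : i ∈ C) :
    lcount C (i + 1) = lcount C i + 1 := by
  unfold lcount
  rw [Finset.range_add_one, Finset.inter_comm, Finset.insert_inter_of_mem hi,
    Finset.card_insert_of_notMem (by simp), Finset.inter_comm]

/-- along a run of consecutive ones, `lcount` increases by one each step -/
lemma lcount_run {C : Finset ℕ} {i : ℕ} :
    ∀ d : ℕ, (∀ m, i ≤ m → m < i + d → m ∈ C) → lcount C (i + d) = lcount C i + d := by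
  intro d
  induction d with
  | zero => simp
  | succ d ih =>
    intro h
    have h1 : i + (d + 1) = (i + d) + 1 := by omega
    rw [h1, lcount_succ_of_mem (h _ (by omega) (by omega)), ih (fun m hm hm' => h m hm (by omega))]
    omega

lemma exists_zero (C : Finset ℕ) (i : ℕ) : ∃ m, i < m ∧ m ∉ C := by
  refine ⟨C.sup id + i + 1, by omega, fun h => ?_⟩
  have := Finset.le_sup (f := id) h
  simp only [id] at this
  omega

/-- next position strictly after `i` that is not in `C` -/
def nextzero (C : Finset ℕ) (i : ℕ) : ℕ := Nat.find (exists_zero C i)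

lemma nextzero_spec (C : Finset ℕ) (i : ℕ) :
    i < nextzero C i ∧ nextzero C i ∉ C := Nat.find_spec (exists_zero C i)

lemma nextzero_min {C : Finset ℕ} {i m : ℕ} (h1 : i < m) (h2 : m < nextzero C i) : m ∈ C := by
  have := Nat.find_min (exists_zero C i) (m := m) h2
  simp only [not_and, not_not] at this
  exact this h1

lemma sum_two_pow (m : ℕ) : ∑ e ∈ Finset.range m, 2 ^ e = 2 ^ m - 1 := by
  induction m with
  | zero => simp
  | succ m ih =>
    rw [Finset.sum_range_succ, ih, pow_succ]
    have : 1 ≤ 2 ^ m := Nat.one_le_two_pow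
    omega

lemma nextzero_lt {n : ℕ} {C : Finset ℕ} (hC : C ⊆ Finset.range n) {i : ℕ} (hi : i ∈ C)
    (hpos : lcount C i + 1 ≤ n - C.card + 2 * lcount C i - i) : nextzero C i < n := by
  by_contra hcon
  push_neg at hcon
  -- then every m with i < m < n is in C, so Ico i n ⊆ C
  have hIco : Finset.Ico i n ⊆ C := by
    intro m hm
    rcases Finset.mem_Ico.1 hm with ⟨h1, h2⟩
    rcases eq_or_lt_of_le h1 with rfl | h1
    · exact hi
    · exact nextzero_min h1 (by omega)
  have hdisj : Disjoint (C ∩ Finset.range i) (Finset.Ico i n) := by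
    simp only [Finset.disjoint_left]
    intro a ha ha'
    rcases Finset.mem_inter.1 ha with ⟨_, h⟩
    rcases Finset.mem_Ico.1 ha' with ⟨h', _⟩
    simp at h; omega
  have hsub : (C ∩ Finset.range i) ∪ Finset.Ico i n ⊆ C :=
    Finset.union_subset Finset.inter_subset_left hIco
  have hcard := Finset.card_le_card hsub
  rw [Finset.card_union_of_disjoint hdisj, Nat.card_Ico] at hcard
  have hin : i < n := by simpa using hC hi
  have := lcount_le_self C i
  unfold lcount at *
  omega

def expo (n : ℕ) (C : Finset ℕ) (i : ℕ) : ℕ := n - C.card + 2 * lcount C i - i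

lemma pot_le_descents {n : ℕ} {C : Finset ℕ} (hC : C ⊆ Finset.range n) :
    potential n C ≤
      ∑ j ∈ (Finset.range (n-1)).filter (fun j => j ∈ C ∧ j + 1 ∉ C),
        2 ^ (n - C.card + 2 * lcount C j - j + 1) := by
  classical
  have hpow : ∀ j, n - C.card + 2 * lcount C j - j + 1 = expo n C j + 1 := fun j => rfl
  have hfiber : ∀ i ∈ C.filter (fun i => lcount C i + 1 ≤ expo n C i),
      (nextzero C i - 1) ∈ (Finset.range (n-1)).filter (fun j => j ∈ C ∧ j + 1 ∉ C) ∧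
      i ≤ nextzero C i - 1 ∧
      expo n C (nextzero C i - 1) = expo n C i + (nextzero C i - 1 - i) := by
    intro i hi
    rcases Finset.mem_filter.1 hi with ⟨hiC, hip⟩
    obtain ⟨hzi, hznC⟩ := nextzero_spec C i
    have hzn : nextzero C i < n := nextzero_lt hC hiC hip
    generalize hz : nextzero C i = z at hzi hznC hzn ⊢
    have hij : i ≤ z - 1 := by omega
    have hrun : ∀ m, i ≤ m → m < i + (z - 1 - i) → m ∈ C := by
      intro m h1 h2
      rcases eq_or_lt_of_le h1 with rfl | h1
      · exact hiC
      · exact nextzero_min h1 (by omega)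
    have hl : lcount C (z - 1) = lcount C i + (z - 1 - i) := by
      have := lcount_run (C := C) (i := i) (z - 1 - i) hrun
      rw [show i + (z - 1 - i) = z - 1 by omega] at this
      exact this
    have hjC : z - 1 ∈ C := by
      rcases eq_or_lt_of_le hij with h | h
      · rw [← h]; exact hiC
      · exact nextzero_min (C := C) (i := i) (m := z - 1) (by omega) (by omega)
    have hjn : z - 1 + 1 ∉ C := by rw [show z - 1 + 1 = z by omega]; exact hznC
    have hki := key_ineq hC hiC
    have hkj := key_ineq hC hjC
    have hls := lcount_le_self C i
    have hjr : z - 1 ∈ Finset.range (n - 1) := Finset.mem_range.2 (by omega)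
    refine ⟨Finset.mem_filter.2 ⟨hjr, hjC, hjn⟩, hij, ?_⟩
    unfold expo at *
    omega
  have step1 : potential n C ≤ ∑ i ∈ C.filter (fun i => lcount C i + 1 ≤ expo n C i),
      2 ^ expo n C i := by
    rw [potential, ← Finset.sum_filter_add_sum_filter_not C (fun i => lcount C i + 1 ≤ expo n C i)]
    have hz : ∑ i ∈ C.filter (fun i => ¬ (lcount C i + 1 ≤ expo n C i)),
        (2 ^ (n - C.card + 2 * lcount C i - i) - 2 ^ lcount C i) = 0 := by
      apply Finset.sum_eq_zero
      intro i hi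
      rcases Finset.mem_filter.1 hi with ⟨_, hnp⟩
      rw [not_le] at hnp
      exact Nat.sub_eq_zero_of_le (Nat.pow_le_pow_right (by norm_num)
        (by unfold expo at hnp; omega))
    rw [hz, add_zero]
    exact Finset.sum_le_sum (fun i _ => Nat.sub_le _ _)
  have step3 : ∑ i ∈ C.filter (fun i => lcount C i + 1 ≤ expo n C i), 2 ^ expo n C i
      = ∑ j ∈ (Finset.range (n-1)).filter (fun j => j ∈ C ∧ j + 1 ∉ C),
          ∑ i ∈ (C.filter (fun i => lcount C i + 1 ≤ expo n C i)).filter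
            (fun i => nextzero C i - 1 = j), 2 ^ expo n C i :=
    (Finset.sum_fiberwise_of_maps_to (fun i hi => (hfiber i hi).1) _).symm
  have step4 : ∀ j ∈ (Finset.range (n-1)).filter (fun j => j ∈ C ∧ j + 1 ∉ C),
      ∑ i ∈ (C.filter (fun i => lcount C i + 1 ≤ expo n C i)).filter
        (fun i => nextzero C i - 1 = j), 2 ^ expo n C i ≤ 2 ^ (expo n C j + 1) := by
    intro j hj
    have hFf : ∀ i ∈ (C.filter (fun i => lcount C i + 1 ≤ expo n C i)).filter
        (fun i => nextzero C i - 1 = j), i ≤ j ∧ expo n C j = expo n C i + (j - i) := by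
      intro i hi
      rcases Finset.mem_filter.1 hi with ⟨hi', heq⟩
      obtain ⟨_, h2, h3⟩ := hfiber i hi'
      rw [heq] at h2 h3
      exact ⟨h2, h3⟩
    have hinj : ∀ i1 ∈ (C.filter (fun i => lcount C i + 1 ≤ expo n C i)).filter
        (fun i => nextzero C i - 1 = j), ∀ i2 ∈ (C.filter (fun i => lcount C i + 1 ≤ expo n C i)).filter
        (fun i => nextzero C i - 1 = j), expo n C i1 = expo n C i2 → i1 = i2 := by
      intro i1 h1 i2 h2 he
      obtain ⟨ha1, hb1⟩ := hFf i1 h1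
      obtain ⟨ha2, hb2⟩ := hFf i2 h2
      omega
    have himg := (Finset.sum_image (f := fun e => (2:ℕ) ^ e) hinj).symm
    rw [himg]
    have hsub : ((C.filter (fun i => lcount C i + 1 ≤ expo n C i)).filter
        (fun i => nextzero C i - 1 = j)).image (expo n C) ⊆ Finset.range (expo n C j + 1) := by
      intro e he
      rcases Finset.mem_image.1 he with ⟨i, hi, rfl⟩
      obtain ⟨ha, hb⟩ := hFf i hi
      simp only [Finset.mem_range]
      omega
    calc ∑ e ∈ ((C.filter (fun i => lcount C i + 1 ≤ expo n C i)).filter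
          (fun i => nextzero C i - 1 = j)).image (expo n C), 2 ^ e
        ≤ ∑ e ∈ Finset.range (expo n C j + 1), 2 ^ e := Finset.sum_le_sum_of_subset hsub
      _ = 2 ^ (expo n C j + 1) - 1 := sum_two_pow _
      _ ≤ 2 ^ (expo n C j + 1) := Nat.sub_le _ _
  simp only [hpow]
  calc potential n C ≤ _ := step1
    _ = _ := step3
    _ ≤ ∑ j ∈ (Finset.range (n-1)).filter (fun j => j ∈ C ∧ j + 1 ∉ C), 2 ^ (expo n C j + 1) :=
        Finset.sum_le_sum step4

lemma main_nat {n : ℕ} {C : Finset ℕ} (hC : C ⊆ Finset.range n) :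
    potential n C + ∑ j ∈ Finset.range (n-1), 4 * potential n (bstep C j)
      ≤ 4 * (n-1) * potential n C := by
  classical
  have hsplit := Finset.sum_filter_add_sum_filter_not (Finset.range (n-1))
    (fun j => j ∈ C ∧ j + 1 ∉ C) (fun j => 4 * potential n (bstep C j))
  have hnot : ∀ j ∈ (Finset.range (n-1)).filter (fun j => ¬(j ∈ C ∧ j + 1 ∉ C)),
      4 * potential n (bstep C j) = 4 * potential n C := by
    intro j hj
    rw [bstep_eq_of_not (Finset.mem_filter.1 hj).2]
  have hswap : ∀ j ∈ (Finset.range (n-1)).filter (fun j => j ∈ C ∧ j + 1 ∉ C),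
      4 * potential n (bstep C j) + 2 ^ (n - C.card + 2 * lcount C j - j + 1)
        = 4 * potential n C := by
    intro j hj
    rcases Finset.mem_filter.1 hj with ⟨hjr, hjC, hj1⟩
    have hjn : j + 1 < n := by have := Finset.mem_range.1 hjr; omega
    have hs := potential_bstep_swap hC hjC hj1 hjn
    have hst := key_ineq_strict hC hjC hj1 hjn
    have hls := lcount_le_self C j
    have hlk := lcount_le_card C j
    have hkn : C.card ≤ n := by simpa using Finset.card_le_card hC
    have hexp : n - C.card + 2 * lcount C j - j + 1
        = (n - C.card + 2 * lcount C j - j - 1) + 2 := by omega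
    rw [hexp, pow_add, show (2:ℕ)^2 = 4 from rfl]
    omega
  rw [← hsplit, Finset.sum_congr rfl hnot]
  have hD := pot_le_descents hC
  have hDsum : ∑ j ∈ (Finset.range (n-1)).filter (fun j => j ∈ C ∧ j + 1 ∉ C),
        4 * potential n (bstep C j)
      + ∑ j ∈ (Finset.range (n-1)).filter (fun j => j ∈ C ∧ j + 1 ∉ C),
        2 ^ (n - C.card + 2 * lcount C j - j + 1)
      = ∑ j ∈ (Finset.range (n-1)).filter (fun j => j ∈ C ∧ j + 1 ∉ C),
        4 * potential n C := by
    rw [← Finset.sum_add_distrib]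
    exact Finset.sum_congr rfl hswap
  have hconst : ∑ j ∈ (Finset.range (n-1)).filter (fun j => j ∈ C ∧ j + 1 ∉ C),
        4 * potential n C
      + ∑ j ∈ (Finset.range (n-1)).filter (fun j => ¬(j ∈ C ∧ j + 1 ∉ C)),
        4 * potential n C
      = (n-1) * (4 * potential n C) := by
    rw [Finset.sum_filter_add_sum_filter_not, Finset.sum_const, Finset.card_range, smul_eq_mul]
  rw [show 4 * (n-1) * potential n C = (n-1) * (4 * potential n C) from by ring]
  omega

lemma lcount_strict {C : Finset ℕ} {i i' : ℕ} (hi : i ∈ C) (h : i < i') :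
    lcount C i < lcount C i' := by
  have hsub : insert i (C ∩ Finset.range i) ⊆ C ∩ Finset.range i' := by
    intro x hx
    rcases Finset.mem_insert.1 hx with rfl | hx
    · exact Finset.mem_inter.2 ⟨hi, Finset.mem_range.2 h⟩
    · rcases Finset.mem_inter.1 hx with ⟨h1, h2⟩
      exact Finset.mem_inter.2 ⟨h1, Finset.mem_range.2 (by simp at h2; omega)⟩
  have := Finset.card_le_card hsub
  rw [Finset.card_insert_of_notMem (by simp)] at this
  unfold lcount
  omega

lemma sum_two_pow_lcount (C : Finset ℕ) : ∑ i ∈ C, 2 ^ lcount C i ≤ 2 ^ C.card - 1 := by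
  classical
  have hinj : ∀ i1 ∈ C, ∀ i2 ∈ C, lcount C i1 = lcount C i2 → i1 = i2 := by
    intro i1 h1 i2 h2 he
    by_contra hne
    rcases Nat.lt_or_ge i1 i2 with h | h
    · have := lcount_strict h1 h; omega
    · have : i2 < i1 := by omega
      have := lcount_strict h2 this; omega
  rw [← Finset.sum_image (f := fun e => (2:ℕ) ^ e) hinj]
  have hsub : C.image (lcount C) ⊆ Finset.range C.card := by
    intro e he
    rcases Finset.mem_image.1 he with ⟨i, hi, rfl⟩
    exact Finset.mem_range.2 (lcount_lt_card hi)
  calc ∑ e ∈ C.image (lcount C), 2 ^ e ≤ ∑ e ∈ Finset.range C.card, 2 ^ e :=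
        Finset.sum_le_sum_of_subset hsub
    _ = 2 ^ C.card - 1 := sum_two_pow _

lemma pot_le_two_pow {n : ℕ} {C : Finset ℕ} (hC : C ⊆ Finset.range n) :
    potential n C ≤ 2 ^ n := by
  have hkn : C.card ≤ n := by simpa using Finset.card_le_card hC
  have h1 : potential n C ≤ ∑ i ∈ C, 2 ^ (n - C.card) * 2 ^ lcount C i := by
    rw [potential]
    apply Finset.sum_le_sum
    intro i hi
    have hki := key_ineq hC hi
    have hls := lcount_le_self C i
    calc 2 ^ (n - C.card + 2 * lcount C i - i) - 2 ^ lcount C i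
        ≤ 2 ^ (n - C.card + 2 * lcount C i - i) := Nat.sub_le _ _
      _ ≤ 2 ^ (n - C.card + lcount C i) := Nat.pow_le_pow_right (by norm_num) (by omega)
      _ = 2 ^ (n - C.card) * 2 ^ lcount C i := pow_add 2 _ _
  calc potential n C ≤ ∑ i ∈ C, 2 ^ (n - C.card) * 2 ^ lcount C i := h1
    _ = 2 ^ (n - C.card) * ∑ i ∈ C, 2 ^ lcount C i := by rw [Finset.mul_sum]
    _ ≤ 2 ^ (n - C.card) * 2 ^ C.card := by
        exact Nat.mul_le_mul le_rfl (le_trans (sum_two_pow_lcount C) (Nat.sub_le _ _))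
    _ = 2 ^ (n - C.card + C.card) := (pow_add 2 _ _).symm
    _ = 2 ^ n := by rw [Nat.sub_add_cancel hkn]

lemma pot_eq_zero_imp {n : ℕ} {C : Finset ℕ} (hC : C ⊆ Finset.range n)
    (h : potential n C = 0) : C = Finset.Ico (n - C.card) n := by
  rcases C.eq_empty_or_nonempty with rfl | hne
  · simp
  have hkn : C.card ≤ n := by simpa using Finset.card_le_card hC
  set i0 := C.min' hne with hi0def
  have hi0 : i0 ∈ C := C.min'_mem hne
  have hl0 : lcount C i0 = 0 := by
    unfold lcount
    rw [Finset.card_eq_zero]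
    apply Finset.eq_empty_of_forall_notMem
    intro x hx
    rcases Finset.mem_inter.1 hx with ⟨h1, h2⟩
    have := C.min'_le x h1
    simp only [Finset.mem_range] at h2
    omega
  have hterm : 2 ^ (n - C.card + 2 * lcount C i0 - i0) - 2 ^ lcount C i0 = 0 := by
    rw [potential] at h
    exact (Finset.sum_eq_zero_iff.1 h) i0 hi0
  rw [hl0] at hterm
  have hki := key_ineq hC hi0
  rw [hl0] at hki
  have he : n - C.card + 2 * 0 - i0 = 0 := by
    by_contra hcon
    have h2 : (2:ℕ) ^ 1 ≤ 2 ^ (n - C.card + 2 * 0 - i0) :=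
      Nat.pow_le_pow_right (by norm_num) (by omega)
    norm_num at h2 hterm
    omega
  have hi0n : i0 = n - C.card := by omega
  have hsub : C ⊆ Finset.Ico (n - C.card) n := by
    intro x hx
    refine Finset.mem_Ico.2 ⟨?_, by simpa using hC hx⟩
    have := C.min'_le x hx
    omega
  apply Finset.eq_of_subset_of_card_le hsub
  rw [Nat.card_Ico]
  omega

lemma tsum_pure_mul {α : Type*} (c : α) (g : α → ℝ≥0∞) :
    ∑' b, (PMF.pure c) b * g b = g c := by
  rw [tsum_eq_single c]
  · simp [PMF.pure_apply]
  · intro b hb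
    simp [PMF.pure_apply, hb]

lemma tsum_bind_mul {α β : Type*} (p : PMF α) (q : α → PMF β) (g : β → ℝ≥0∞) :
    ∑' b, (p.bind q) b * g b = ∑' a, p a * ∑' b, q a b * g b := by
  simp only [PMF.bind_apply]
  calc ∑' b, (∑' a, p a * q a b) * g b
      = ∑' b, ∑' a, p a * q a b * g b := by
        congr 1; funext b; rw [ENNReal.tsum_mul_right]
    _ = ∑' a, ∑' b, p a * q a b * g b := ENNReal.tsum_comm
    _ = ∑' a, p a * ∑' b, q a b * g b := by
        congr 1; funext a
        simp_rw [mul_assoc]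
        rw [ENNReal.tsum_mul_left]

lemma tsum_map_mul {α β : Type*} (p : PMF α) (f : α → β) (g : β → ℝ≥0∞) :
    ∑' b, (p.map f) b * g b = ∑' a, p a * g (f a) := by
  rw [PMF.map, tsum_bind_mul]
  congr 1; funext a
  rw [Function.comp_apply, tsum_pure_mul]





lemma step_exp {n : ℕ} (hn : 2 ≤ n) {C : Finset ℕ} (hC : C ⊆ Finset.range n) :
    ∑' D, stepPMF n C D * (potential n D : ℝ≥0∞)
      ≤ (((4*(n-1) - 1 : ℕ) : ℝ≥0∞) / ((4*(n-1) : ℕ) : ℝ≥0∞)) * (potential n C : ℝ≥0∞) := by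
  have hne : (Finset.range (n-1)).Nonempty := ⟨0, Finset.mem_range.2 (by omega)⟩
  rw [stepPMF, dif_pos hne, tsum_map_mul]
  have huni : ∑' j, (PMF.uniformOfFinset (Finset.range (n-1)) hne) j
        * (potential n (bstep C j) : ℝ≥0∞)
      = ∑ j ∈ Finset.range (n-1),
          ((n-1 : ℕ) : ℝ≥0∞)⁻¹ * (potential n (bstep C j) : ℝ≥0∞) := by
    rw [tsum_eq_sum (s := Finset.range (n-1))
      (fun j hj => by simp [PMF.uniformOfFinset_apply, hj])]
    refine Finset.sum_congr rfl (fun j hj => ?_)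
    rw [PMF.uniformOfFinset_apply, if_pos hj, Finset.card_range]
  rw [huni, ← Finset.mul_sum, ← Nat.cast_sum]
  -- nat inequality
  set S : ℕ := ∑ j ∈ Finset.range (n-1), potential n (bstep C j) with hS
  set P : ℕ := potential n C with hP
  have h1 : P + 4 * S ≤ 4*(n-1)*P := by
    have := main_nat hC
    rwa [← Finset.mul_sum, ← hS, ← hP] at this
  have h2 : 4 * S ≤ (4*(n-1) - 1) * P := by
    obtain ⟨m, hm⟩ : ∃ m, 4*(n-1) = m + 1 := ⟨4*(n-1) - 1, by omega⟩
    have h3 : (4*(n-1) - 1) * P + P = 4*(n-1)*P := by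
      rw [hm]; simp only [Nat.add_sub_cancel]; ring
    omega
  -- move to ℝ≥0∞
  have key : (4 : ℝ≥0∞) * (S : ℝ≥0∞) ≤ ((4*(n-1) - 1 : ℕ) : ℝ≥0∞) * (P : ℝ≥0∞) := by
    have : ((4 * S : ℕ) : ℝ≥0∞) ≤ (((4*(n-1) - 1) * P : ℕ) : ℝ≥0∞) := Nat.cast_le.2 h2
    push_cast at this ⊢
    convert this using 2
  have hcast : ((4*(n-1) : ℕ) : ℝ≥0∞) = 4 * ((n-1 : ℕ) : ℝ≥0∞) := by push_cast; ring
  have hlhs : ((n-1 : ℕ) : ℝ≥0∞)⁻¹ * (S : ℝ≥0∞)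
      = 4 * (S : ℝ≥0∞) / ((4*(n-1) : ℕ) : ℝ≥0∞) := by
    rw [hcast, ENNReal.mul_div_mul_left _ _ (by norm_num) (by norm_num),
      div_eq_mul_inv, mul_comm]
  rw [hlhs]
  calc 4 * (S : ℝ≥0∞) / ((4*(n-1) : ℕ) : ℝ≥0∞)
      ≤ ((4*(n-1) - 1 : ℕ) : ℝ≥0∞) * (P : ℝ≥0∞) / ((4*(n-1) : ℕ) : ℝ≥0∞) :=
        ENNReal.div_le_div_right key _
    _ = ((4*(n-1) - 1 : ℕ) : ℝ≥0∞) / ((4*(n-1) : ℕ) : ℝ≥0∞) * (P : ℝ≥0∞) := by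
        rw [div_eq_mul_inv, div_eq_mul_inv, mul_right_comm]

lemma stepPMF_good {n : ℕ} (hn : 2 ≤ n) {C D : Finset ℕ} (hC : C ⊆ Finset.range n)
    (hD : stepPMF n C D ≠ 0) : D ⊆ Finset.range n ∧ D.card = C.card := by
  have hne : (Finset.range (n-1)).Nonempty := ⟨0, Finset.mem_range.2 (by omega)⟩
  rw [stepPMF, dif_pos hne] at hD
  have hmem : D ∈ ((PMF.uniformOfFinset (Finset.range (n-1)) hne).map (bstep C)).support :=
    (PMF.mem_support_iff _ _).2 hD
  rw [PMF.support_map, PMF.support_uniformOfFinset] at hmem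
  obtain ⟨j, hj, rfl⟩ := hmem
  have hjn : j + 1 < n := by
    have := Finset.mem_range.1 (by exact_mod_cast hj)
    omega
  exact ⟨bstep_subset hC hjn, bstep_card j⟩

lemma iter_good {n : ℕ} (hn : 2 ≤ n) {C0 : Finset ℕ} (hC0 : C0 ⊆ Finset.range n) :
    ∀ t C, iterPMF n C0 t C ≠ 0 → C ⊆ Finset.range n ∧ C.card = C0.card := by
  intro t
  induction t with
  | zero =>
    intro C hC
    have : C ∈ (PMF.pure C0).support := (PMF.mem_support_iff _ _).2 hC
    rw [PMF.support_pure] at this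
    rw [Set.mem_singleton_iff.1 this]
    exact ⟨hC0, rfl⟩
  | succ t ih =>
    intro C hC
    have : C ∈ ((iterPMF n C0 t).bind (stepPMF n)).support := (PMF.mem_support_iff _ _).2 hC
    rw [PMF.support_bind] at this
    obtain ⟨B, hB, hCB⟩ := Set.mem_iUnion₂.1 this
    obtain ⟨h1, h2⟩ := ih B ((PMF.mem_support_iff _ _).1 hB)
    obtain ⟨h3, h4⟩ := stepPMF_good hn h1 ((PMF.mem_support_iff _ _).1 hCB)
    exact ⟨h3, h4.trans h2⟩

lemma iter_exp {n : ℕ} (hn : 2 ≤ n) {C0 : Finset ℕ} (hC0 : C0 ⊆ Finset.range n) (t : ℕ) :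
    ∑' C, iterPMF n C0 t C * (potential n C : ℝ≥0∞)
      ≤ (((4*(n-1) - 1 : ℕ) : ℝ≥0∞) / ((4*(n-1) : ℕ) : ℝ≥0∞))^t * (potential n C0 : ℝ≥0∞) := by
  set r : ℝ≥0∞ := ((4*(n-1) - 1 : ℕ) : ℝ≥0∞) / ((4*(n-1) : ℕ) : ℝ≥0∞) with hr
  induction t with
  | zero =>
    rw [iterPMF, tsum_pure_mul, pow_zero, one_mul]
  | succ t ih =>
    rw [iterPMF, tsum_bind_mul]
    calc ∑' C, iterPMF n C0 t C * ∑' D, stepPMF n C D * (potential n D : ℝ≥0∞)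
        ≤ ∑' C, iterPMF n C0 t C * (r * (potential n C : ℝ≥0∞)) := by
          apply ENNReal.tsum_le_tsum
          intro C
          by_cases h : iterPMF n C0 t C = 0
          · simp [h]
          · exact mul_le_mul_right (step_exp hn (iter_good hn hC0 t C h).1) _
      _ = r * ∑' C, iterPMF n C0 t C * (potential n C : ℝ≥0∞) := by
          simp_rw [mul_left_comm]
          rw [ENNReal.tsum_mul_left]
      _ ≤ r * (r^t * (potential n C0 : ℝ≥0∞)) := mul_le_mul_right ih _
      _ = r^(t+1) * (potential n C0 : ℝ≥0∞) := by ring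

lemma final_num {n t : ℕ} (hn : 2 ≤ n) {η : ℝ} (hη : 0 < η)
    (ht : 4 * ((n : ℝ) - 1) * ((n : ℝ) * Real.log 2 + η * Real.log n) ≤ (t : ℝ)) :
    (((4*(n-1) - 1 : ℕ) : ℝ≥0∞) / ((4*(n-1) : ℕ) : ℝ≥0∞))^t * ((2^n : ℕ) : ℝ≥0∞)
      ≤ ENNReal.ofReal ((n : ℝ) ^ (-η)) := by
  set a : ℕ := 4*(n-1) with ha
  have ha4 : 4 ≤ a := by omega
  have hapos : (0:ℝ) < (a:ℝ) := by positivity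
  set ρ : ℝ := ((a:ℝ) - 1)/(a:ℝ) with hρ
  have h0ρ : 0 ≤ ρ := by
    apply div_nonneg _ (le_of_lt hapos)
    have : (4:ℝ) ≤ (a:ℝ) := by exact_mod_cast ha4
    linarith
  have hcast1 : ((a - 1 : ℕ) : ℝ≥0∞) = ENNReal.ofReal ((a:ℝ) - 1) := by
    rw [show ((a:ℝ) - 1) = ((a - 1 : ℕ) : ℝ) by push_cast [Nat.cast_sub (by omega : 1 ≤ a)]; ring,
      ENNReal.ofReal_natCast]
  have hcast2 : ((a : ℕ) : ℝ≥0∞) = ENNReal.ofReal (a:ℝ) := (ENNReal.ofReal_natCast a).symm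
  have hrρ : ((a - 1 : ℕ) : ℝ≥0∞) / ((a : ℕ) : ℝ≥0∞) = ENNReal.ofReal ρ := by
    rw [hcast1, hcast2, ← ENNReal.ofReal_div_of_pos hapos]
  have hcast3 : ((2^n : ℕ) : ℝ≥0∞) = ENNReal.ofReal ((2:ℝ)^n) := by
    rw [show ((2:ℝ)^n) = ((2^n : ℕ) : ℝ) by push_cast; ring, ENNReal.ofReal_natCast]
  rw [hrρ, hcast3, ← ENNReal.ofReal_pow h0ρ, ← ENNReal.ofReal_mul (by positivity)]
  apply ENNReal.ofReal_le_ofReal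
  -- now a real inequality
  have hρe : ρ ≤ Real.exp (-(1/(a:ℝ))) := by
    have h := Real.add_one_le_exp (-(1/(a:ℝ)))
    have : ρ = 1 - 1/(a:ℝ) := by rw [hρ, sub_div, div_self hapos.ne']
    rw [this]; linarith
  have hpow : ρ^t ≤ Real.exp (-(1/(a:ℝ)))^t := pow_le_pow_left₀ h0ρ hρe t
  have hexp1 : Real.exp (-(1/(a:ℝ)))^t = Real.exp (-(t/(a:ℝ))) := by
    rw [← Real.exp_nat_mul]
    congr 1
    field_simp
  have h2n : (2:ℝ)^n = Real.exp ((n:ℝ) * Real.log 2) := by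
    rw [Real.exp_nat_mul, Real.exp_log (by norm_num : (0:ℝ) < 2)]
  have hnpos : (0:ℝ) < (n:ℝ) := by positivity
  have hrpow : (n:ℝ) ^ (-η) = Real.exp (Real.log n * (-η)) :=
    Real.rpow_def_of_pos hnpos (-η)
  calc ρ^t * (2:ℝ)^n ≤ Real.exp (-(t/(a:ℝ))) * Real.exp ((n:ℝ) * Real.log 2) := by
        rw [← hexp1, ← h2n]
        exact mul_le_mul_of_nonneg_right hpow (by positivity)
    _ = Real.exp (-(t/(a:ℝ)) + (n:ℝ) * Real.log 2) := (Real.exp_add _ _).symm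
    _ ≤ Real.exp (Real.log n * (-η)) := by
        apply Real.exp_le_exp.2
        have haeq : (a:ℝ) = 4 * ((n:ℝ) - 1) := by
          rw [ha]; push_cast [Nat.cast_sub (show 1 ≤ n by omega)]; ring
        have hdiv : (n:ℝ) * Real.log 2 + η * Real.log n ≤ (t:ℝ) / (a:ℝ) := by
          rw [le_div_iff₀ hapos, haeq]
          linarith [ht]
        linarith [hdiv]
    _ = (n:ℝ) ^ (-η) := hrpow.symm

/-- For `t ≥ 4(n-1)(n·ln 2 + η·ln n)`, the probability that the configuration after `t`
steps is not sorted (i.e. is not `{n-k,…,n-1}` where `k = |C₀|`) is at most `n^(-η)`. -/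
theorem bubble_sort_sorted_whp (η : ℝ) (hη : 0 < η) (n : ℕ) (hn : 2 ≤ n) (C0 : Finset ℕ)
    (hC : C0 ⊆ Finset.range n) (t : ℕ)
    (ht : 4 * ((n : ℝ) - 1) * ((n : ℝ) * Real.log 2 + η * Real.log n) ≤ (t : ℝ)) :
    (iterPMF n C0 t).toOuterMeasure {C | C ≠ Finset.Ico (n - C0.card) n} ≤
      ENNReal.ofReal ((n : ℝ) ^ (-η)) := by
  have hmarkov : (iterPMF n C0 t).toOuterMeasure {C | C ≠ Finset.Ico (n - C0.card) n}
      ≤ ∑' C, iterPMF n C0 t C * (potential n C : ℝ≥0∞) := by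
    rw [PMF.toOuterMeasure_apply]
    apply ENNReal.tsum_le_tsum
    intro C
    by_cases hmem : C ∈ {C | C ≠ Finset.Ico (n - C0.card) n}
    · rw [Set.indicator_of_mem hmem]
      by_cases h0 : iterPMF n C0 t C = 0
      · simp [h0]
      · obtain ⟨hsub, hcard⟩ := iter_good hn hC t C h0
        have hne : C ≠ Finset.Ico (n - C.card) n := by rw [hcard]; exact hmem
        have hpot : potential n C ≠ 0 := fun hz => hne (pot_eq_zero_imp hsub hz)
        have h1 : (1:ℝ≥0∞) ≤ (potential n C : ℝ≥0∞) := by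
          exact_mod_cast Nat.one_le_iff_ne_zero.2 hpot
        calc iterPMF n C0 t C = iterPMF n C0 t C * 1 := (mul_one _).symm
          _ ≤ iterPMF n C0 t C * (potential n C : ℝ≥0∞) := mul_le_mul_right h1 _
    · rw [Set.indicator_of_notMem hmem]
      exact zero_le
  calc (iterPMF n C0 t).toOuterMeasure {C | C ≠ Finset.Ico (n - C0.card) n}
      ≤ ∑' C, iterPMF n C0 t C * (potential n C : ℝ≥0∞) := hmarkov
    _ ≤ (((4*(n-1) - 1 : ℕ) : ℝ≥0∞) / ((4*(n-1) : ℕ) : ℝ≥0∞))^t * (potential n C0 : ℝ≥0∞) :=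
        iter_exp hn hC t
    _ ≤ (((4*(n-1) - 1 : ℕ) : ℝ≥0∞) / ((4*(n-1) : ℕ) : ℝ≥0∞))^t * ((2^n : ℕ) : ℝ≥0∞) :=
        mul_le_mul_right (Nat.cast_le.2 (pot_le_two_pow hC)) _
    _ ≤ ENNReal.ofReal ((n : ℝ) ^ (-η)) := final_num hn hη ht
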